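/- arXiv:1611.05728 — 4 statements merged into one kernel-verified Lean document; each statement's English description precedes it below -/
import Mathlib

section
/- Let h(x) := (1 + x/2)e^{-x} - 1 + x/2. Then for all x ≥ 0, h(x) ≤ x³/12. -/
open Real

/-! Clearing the factor `exp (-x)`, the claim is `1 + x/2 ≤ (1 - x/2 + x³/12) eˣ`. The cubic factor is
positive, so `eˣ` may be replaced by its cubic Taylor polynomial, and the product
`(1 - x/2 + x³/12)(1 + x + x²/2 + x³/6) = 1 + x/2 + x⁵/24 + x⁶/72` exceeds `1 + x/2`. -/

theorem cubic_taylor_le_exp {x : ℝ} (hx : 0 ≤ x) : 1 + x + x ^ 2 / 2 + x ^ 3 / 6 ≤ exp x := by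
  have h := sum_le_exp_of_nonneg hx 4
  norm_num [Finset.sum_range_succ, Nat.factorial] at h
  linarith

theorem one_sub_half_add_cube_div_twelve_pos {x : ℝ} (hx : 0 ≤ x) : 0 < 1 - x / 2 + x ^ 3 / 12 := by
  nlinarith [sq_nonneg (x - 1), sq_nonneg (x ^ 2 - 2)]

theorem one_add_half_le_mul_exp {x : ℝ} (hx : 0 ≤ x) :
    1 + x / 2 ≤ (1 - x / 2 + x ^ 3 / 12) * exp x :=
  calc 1 + x / 2 ≤ 1 + x / 2 + x ^ 5 / 24 + x ^ 6 / 72 := by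
        have := pow_nonneg hx 5
        have := pow_nonneg hx 6
        linarith
    _ = (1 - x / 2 + x ^ 3 / 12) * (1 + x + x ^ 2 / 2 + x ^ 3 / 6) := by ring
    _ ≤ (1 - x / 2 + x ^ 3 / 12) * exp x :=
        mul_le_mul_of_nonneg_left (cubic_taylor_le_exp hx) (one_sub_half_add_cube_div_twelve_pos hx).le

theorem stmt3 (x : ℝ) (hx : 0 ≤ x) :
    (1 + x / 2) * exp (-x) - 1 + x / 2 ≤ x ^ 3 / 12 := by
  have h : (1 + x / 2) * exp (-x) ≤ 1 - x / 2 + x ^ 3 / 12 := by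
    rw [exp_neg, ← div_eq_mul_inv, div_le_iff₀ (exp_pos x)]
    exact one_add_half_le_mul_exp hx
  linarith
end

section
/- For every A > 0, the equation a - a²/2 = A·(e^{-a} - 1 + a) has a unique solution a = a(A) in the open interval (0, 2). -/
/-!
The defect `g(a) = a - a²/2 - A (e^{-a} - 1 + a)` of the equation has second derivative
`-1 - A e^{-a} < 0`, so `g` is strictly concave; as `g 0 = 0`, it vanishes at most once on
`(0, ∞)`. Since `g'(0) = 1 > 0` while `g 2 = -A (e^{-2} + 1) < 0`, the intermediate value theorem
gives a zero in `(0, 2)`.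
-/

open Real Set Filter Topology

theorem HasDerivAt.eventually_nhdsGT_lt {f : ℝ → ℝ} {f' x : ℝ} (hf : HasDerivAt f f' x)
    (hf' : 0 < f') : ∀ᶠ y in 𝓝[>] x, f x < f y := by
  have hslope := (hasDerivAt_iff_tendsto_slope.mp hf).mono_left (nhdsGT_le_nhdsNE x)
  filter_upwards [hslope.eventually_const_lt hf', self_mem_nhdsWithin] with y hy hxy
  rw [slope_def_field] at hy
  exact sub_pos.mp ((div_pos_iff_of_pos_right (sub_pos.mpr hxy)).mp hy)

theorem StrictConcaveOn.eq_of_apply_eq_of_lt {𝕜 β : Type*} [Field 𝕜] [LinearOrder 𝕜]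
    [IsStrictOrderedRing 𝕜] [AddCommMonoid β] [LinearOrder β] [IsOrderedAddMonoid β] [Module 𝕜 β]
    [PosSMulStrictMono 𝕜 β] {s : Set 𝕜} {g : 𝕜 → β} (hg : StrictConcaveOn 𝕜 s g) {x₀ a b : 𝕜}
    (hx₀ : x₀ ∈ s) (ha : a ∈ s) (hb : b ∈ s) (hx₀a : x₀ < a) (hx₀b : x₀ < b) (hga : g a = g x₀)
    (hgb : g b = g x₀) : a = b := by
  wlog hab : a < b generalizing a b
  · rcases (not_lt.mp hab).lt_or_eq with hba | hba
    · exact (this hb ha hx₀b hx₀a hgb hga hba).symm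
    · exact hba.symm
  have hmin := hg.lt_on_openSegment hx₀ hb hx₀b.ne
    (by rw [openSegment_eq_Ioo hx₀b]; exact ⟨hx₀a, hab⟩)
  simp [hga, hgb] at hmin

noncomputable def defect (A a : ℝ) : ℝ := a - a ^ 2 / 2 - A * (exp (-a) - 1 + a)

theorem defect_eq_zero_iff {A a : ℝ} :
    defect A a = 0 ↔ a - a ^ 2 / 2 = A * (exp (-a) - 1 + a) :=
  sub_eq_zero

theorem hasDerivAt_defect (A a : ℝ) :
    HasDerivAt (defect A) (1 - a - A * (1 - exp (-a))) a :=
  (((hasDerivAt_id' a).sub ((hasDerivAt_pow 2 a).div_const 2)).sub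
    ((((hasDerivAt_neg a).exp.sub_const 1).add (hasDerivAt_id' a)).const_mul A)).congr_deriv
    (by ring)

theorem hasDerivAt_deriv_defect (A a : ℝ) :
    HasDerivAt (fun a ↦ 1 - a - A * (1 - exp (-a))) (-1 - A * exp (-a)) a :=
  (((hasDerivAt_id' a).const_sub 1).sub
    (((hasDerivAt_neg a).exp.const_sub 1).const_mul A)).congr_deriv (by ring)

theorem continuous_defect (A : ℝ) : Continuous (defect A) :=
  continuous_iff_continuousAt.mpr fun a ↦ (hasDerivAt_defect A a).continuousAt

theorem strictConcaveOn_defect {A : ℝ} (hA : 0 ≤ A) : StrictConcaveOn ℝ univ (defect A) := by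
  have hderiv : deriv (defect A) = fun a ↦ 1 - a - A * (1 - exp (-a)) :=
    funext fun a ↦ (hasDerivAt_defect A a).deriv
  refine StrictAntiOn.strictConcaveOn_of_deriv convex_univ (continuous_defect A).continuousOn ?_
  rw [hderiv]
  exact (strictAnti_of_hasDerivAt_neg (hasDerivAt_deriv_defect A) fun a ↦ by
    linarith [mul_nonneg hA (exp_pos (-a)).le]).strictAntiOn _

theorem defect_zero (A : ℝ) : defect A 0 = 0 := by simp [defect]

theorem defect_two_neg {A : ℝ} (hA : 0 < A) : defect A 2 < 0 := by
  have : 0 < A * (exp (-2) + 1) := by positivity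
  simp only [defect]
  linarith

theorem stmt4 (A : ℝ) (hA : 0 < A) :
    ∃! a : ℝ, a ∈ Set.Ioo (0 : ℝ) 2 ∧ a - a ^ 2 / 2 = A * (exp (-a) - 1 + a) := by
  obtain ⟨x, hx_pos, hx⟩ := (((hasDerivAt_defect A 0).eventually_nhdsGT_lt (by simp)).and
    (Ioo_mem_nhdsGT two_pos)).exists
  rw [defect_zero] at hx_pos
  obtain ⟨a, ha, ha_zero⟩ := intermediate_value_Ioo' hx.2.le (continuous_defect A).continuousOn
    ⟨defect_two_neg hA, hx_pos⟩
  refine ⟨a, ⟨⟨hx.1.trans ha.1, ha.2⟩, defect_eq_zero_iff.mp ha_zero⟩, ?_⟩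
  rintro b ⟨hb, hb_zero⟩
  exact (strictConcaveOn_defect hA.le).eq_of_apply_eq_of_lt (mem_univ 0) trivial trivial hb.1
    (hx.1.trans ha.1) (by rw [defect_eq_zero_iff.mpr hb_zero, defect_zero])
    (by rw [ha_zero, defect_zero])
end

section
/- The function a ↦ φ(a)/(a - a²/2), where φ(a) = e^{-a} - 1 + a, is strictly increasing on the interval (0, 2). -/
/-! After multiplication by `exp a`, the numerator of the derivative of the quotient becomes
`exp a * (1 - a + a ^ 2 / 2) - (1 - a ^ 2 / 2)`, and already `exp a ≥ 1 + a` bounds this below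
by `a ^ 3 / 2 > 0`. -/

open Real

lemma hasDerivAt_exp_neg_sub_one_add (a : ℝ) :
    HasDerivAt (fun a : ℝ => exp (-a) - 1 + a) (1 - exp (-a)) a :=
  ((((hasDerivAt_neg a).exp).sub_const 1).add (hasDerivAt_id' a)).congr_deriv (by ring)

lemma hasDerivAt_sub_sq_div_two (a : ℝ) :
    HasDerivAt (fun a : ℝ => a - a ^ 2 / 2) (1 - a) a :=
  ((hasDerivAt_id' a).sub ((hasDerivAt_pow 2 a).div_const 2)).congr_deriv (by norm_num)

lemma one_sub_sq_div_two_lt_exp_mul {a : ℝ} (ha : 0 < a) :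
    1 - a ^ 2 / 2 < exp a * (1 - a + a ^ 2 / 2) := by
  have hq : 0 ≤ 1 - a + a ^ 2 / 2 := by nlinarith [sq_nonneg (a - 1)]
  calc 1 - a ^ 2 / 2 < (a + 1) * (1 - a + a ^ 2 / 2) := by nlinarith [pow_pos ha 3]
    _ ≤ exp a * (1 - a + a ^ 2 / 2) := mul_le_mul_of_nonneg_right (add_one_le_exp a) hq

lemma exp_neg_sub_one_add_mul_lt {a : ℝ} (ha : 0 < a) :
    (exp (-a) - 1 + a) * (1 - a) < (1 - exp (-a)) * (a - a ^ 2 / 2) := by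
  have hfactor : (1 - exp (-a)) * (a - a ^ 2 / 2) - (exp (-a) - 1 + a) * (1 - a) =
      exp (-a) * (exp a * (1 - a + a ^ 2 / 2) - (1 - a ^ 2 / 2)) := by
    have hinv : exp (-a) * exp a = 1 := by rw [← exp_add, neg_add_cancel, exp_zero]
    linear_combination (-(1 - a + a ^ 2 / 2)) * hinv
  rw [← sub_pos, hfactor]
  exact mul_pos (exp_pos _) (sub_pos.2 (one_sub_sq_div_two_lt_exp_mul ha))

theorem stmt5 :
    StrictMonoOn (fun a : ℝ => (exp (-a) - 1 + a) / (a - a ^ 2 / 2)) (Set.Ioo (0 : ℝ) 2) := by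
  have hden : ∀ a ∈ Set.Ioo (0 : ℝ) 2, 0 < a - a ^ 2 / 2 := fun a ⟨h0, h2⟩ => by nlinarith
  have hderiv : ∀ a ∈ Set.Ioo (0 : ℝ) 2,
      HasDerivAt (fun a : ℝ => (exp (-a) - 1 + a) / (a - a ^ 2 / 2))
        (((1 - exp (-a)) * (a - a ^ 2 / 2) - (exp (-a) - 1 + a) * (1 - a)) /
          (a - a ^ 2 / 2) ^ 2) a := fun a ha =>
    (hasDerivAt_exp_neg_sub_one_add a).div (hasDerivAt_sub_sq_div_two a) (hden a ha).ne'
  refine strictMonoOn_of_deriv_pos (convex_Ioo 0 2)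
    (fun a ha => (hderiv a ha).continuousAt.continuousWithinAt) fun a ha => ?_
  rw [interior_Ioo] at ha
  rw [(hderiv a ha).deriv]
  exact div_pos (sub_pos.2 (exp_neg_sub_one_add_mul_lt ha.1)) (pow_pos (hden a ha) 2)
end

section
/- Let X be a nonnegative random variable and let β ∈ (1,2). Suppose P(X > x) ≤ C·x^{-β} for all x > 0, for some constant C > 0. Then for every r > 0, E[min(X, r·X²)] ≤ (2/(2-β) + 1/(β-1))·C·r^{β-1}. -/
/-! For `t ≤ 1/r` the event `t < min X (r X²)` forces `X > √(t/r)`, whose probability is at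
most `C r^{β/2} t^{-β/2}`; for `t > 1/r` we use `X > t` and the bound `C t^{-β}` directly.
Integrating these tail bounds via the layer-cake formula gives `2/(2-β) · C r^{β-1}` from
`(0, 1/r]` (integrable at `0` because `β/2 < 1`) and `1/(β-1) · C r^{β-1}` from `(1/r, ∞)`
(integrable since `β > 1`). -/

open MeasureTheory ProbabilityTheory Set

section LayerCake

variable {α : Type*} [MeasurableSpace α] {μ : Measure α} [IsFiniteMeasure μ] {f : α → ℝ}

theorem setLIntegral_measure_lt_le_ofReal_setIntegral {s : Set ℝ} (hs : MeasurableSet s)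
    {g : ℝ → ℝ} (hg : IntegrableOn g s) (h : ∀ t ∈ s, μ.real {x | t < f x} ≤ g t) :
    ∫⁻ t in s, μ {x | t < f x} ≤ ENNReal.ofReal (∫ t in s, g t) := by
  rw [ofReal_integral_eq_lintegral_ofReal hg
    ((ae_restrict_iff' hs).mpr (.of_forall fun t ht => measureReal_nonneg.trans (h t ht)))]
  refine setLIntegral_mono' hs fun t ht => ?_
  rw [← ofReal_measureReal]
  exact ENNReal.ofReal_le_ofReal (h t ht)

theorem integral_le_of_measureReal_lt_le {a : ℝ} (ha : 0 ≤ a) (hf0 : 0 ≤ᵐ[μ] f)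
    (hfm : AEMeasurable f μ) {g₁ g₂ : ℝ → ℝ} (hg₁ : IntegrableOn g₁ (Ioc 0 a))
    (hg₂ : IntegrableOn g₂ (Ioi a)) (h₁ : ∀ t ∈ Ioc 0 a, μ.real {x | t < f x} ≤ g₁ t)
    (h₂ : ∀ t ∈ Ioi a, μ.real {x | t < f x} ≤ g₂ t) :
    ∫ x, f x ∂μ ≤ (∫ t in Ioc 0 a, g₁ t) + ∫ t in Ioi a, g₂ t := by
  have hg₁0 : 0 ≤ ∫ t in Ioc 0 a, g₁ t :=
    setIntegral_nonneg measurableSet_Ioc fun t ht => measureReal_nonneg.trans (h₁ t ht)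
  have hg₂0 : 0 ≤ ∫ t in Ioi a, g₂ t :=
    setIntegral_nonneg measurableSet_Ioi fun t ht => measureReal_nonneg.trans (h₂ t ht)
  rw [integral_eq_lintegral_of_nonneg_ae hf0 hfm.aestronglyMeasurable]
  refine ENNReal.toReal_le_of_le_ofReal (add_nonneg hg₁0 hg₂0) ?_
  rw [lintegral_eq_lintegral_meas_lt μ hf0 hfm, ← Ioc_union_Ioi_eq_Ioi ha,
    lintegral_union measurableSet_Ioi (Ioc_disjoint_Ioi le_rfl), ENNReal.ofReal_add hg₁0 hg₂0]
  exact add_le_add (setLIntegral_measure_lt_le_ofReal_setIntegral measurableSet_Ioc hg₁ h₁)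
    (setLIntegral_measure_lt_le_ofReal_setIntegral measurableSet_Ioi hg₂ h₂)

end LayerCake

theorem Real.sqrt_div_lt_of_lt_mul_sq {t r a : ℝ} (ht : 0 ≤ t) (hr : 0 < r) (ha : 0 ≤ a)
    (h : t < r * a ^ 2) : √(t / r) < a := by
  have ha' : 0 < a := ha.lt_of_ne (by rintro rfl; linarith)
  rw [Real.sqrt_lt' ha', div_lt_iff₀ hr]
  linarith

theorem Real.sqrt_div_rpow_neg {t r : ℝ} (ht : 0 ≤ t) (hr : 0 ≤ r) (β : ℝ) :
    √(t / r) ^ (-β) = r ^ (β / 2) * t ^ (-(β / 2)) := by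
  rw [Real.sqrt_eq_rpow, ← Real.rpow_mul (div_nonneg ht hr), Real.div_rpow ht hr,
    show 1 / 2 * -β = -(β / 2) by ring, Real.rpow_neg hr, div_inv_eq_mul, mul_comm]

theorem integral_Ioc_zero_rpow {s a : ℝ} (hs : -1 < s) (ha : 0 ≤ a) :
    ∫ t in Ioc 0 a, t ^ s = a ^ (s + 1) / (s + 1) := by
  rw [← intervalIntegral.integral_of_le ha, integral_rpow (.inl hs),
    Real.zero_rpow (by linarith), sub_zero]

theorem integrableOn_Ioc_zero_rpow {s a : ℝ} (hs : -1 < s) (ha : 0 ≤ a) :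
    IntegrableOn (fun t : ℝ => t ^ s) (Ioc 0 a) :=
  (intervalIntegrable_iff_integrableOn_Ioc_of_le ha).mp
    (intervalIntegral.intervalIntegrable_rpow' hs)

theorem integral_Ioc_zero_one_div_mul_rpow_neg_half {r β : ℝ} (hr : 0 < r) (hβ : β < 2) :
    ∫ t in Ioc 0 (1 / r), r ^ (β / 2) * t ^ (-(β / 2)) = 2 / (2 - β) * r ^ (β - 1) := by
  rw [integral_const_mul, integral_Ioc_zero_rpow (by linarith) (by positivity), one_div,
    Real.inv_rpow hr.le, ← Real.rpow_neg hr.le, mul_div_assoc', ← Real.rpow_add hr,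
    show -(β / 2) + 1 = (2 - β) / 2 by ring]
  have : 2 - β ≠ 0 := by linarith
  field_simp
  ring_nf

theorem integral_Ioi_one_div_rpow_neg {r β : ℝ} (hr : 0 < r) (hβ : 1 < β) :
    ∫ t in Ioi (1 / r), t ^ (-β) = 1 / (β - 1) * r ^ (β - 1) := by
  rw [integral_Ioi_rpow_of_lt (by linarith) (by positivity), one_div, Real.inv_rpow hr.le,
    ← Real.rpow_neg hr.le, show -(-β + 1) = β - 1 by ring, show -β + 1 = -(β - 1) by ring]
  have : β - 1 ≠ 0 := by linarith
  field_simp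

theorem stmt8_general {Ω : Type*} [MeasureSpace Ω] [IsProbabilityMeasure (ℙ : Measure Ω)]
    (X : Ω → ℝ) (hXm : Measurable X) (hX0 : ∀ ω, 0 ≤ X ω)
    (β C : ℝ) (hβ : β ∈ Set.Ioo (1 : ℝ) 2)
    (htail : ∀ x : ℝ, 0 < x → (ℙ {ω | x < X ω}).toReal ≤ C * x ^ (-β))
    (r : ℝ) (hr : 0 < r) :
    ∫ ω, min (X ω) (r * X ω ^ 2) ≤ (2 / (2 - β) + 1 / (β - 1)) * C * r ^ (β - 1) := by
  obtain ⟨hβ1, hβ2⟩ := hβ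
  have ha : 0 < 1 / r := by positivity
  calc ∫ ω, min (X ω) (r * X ω ^ 2)
      ≤ (∫ t in Ioc 0 (1 / r), C * (r ^ (β / 2) * t ^ (-(β / 2)))) +
          ∫ t in Ioi (1 / r), C * t ^ (-β) := by
        refine integral_le_of_measureReal_lt_le ha.le
          (.of_forall fun ω => le_min (hX0 ω) (mul_nonneg hr.le (sq_nonneg _)))
          (hXm.min (measurable_const.mul (hXm.pow_const 2))).aemeasurable
          (((integrableOn_Ioc_zero_rpow (by linarith) ha.le).const_mul _).const_mul _)
          ((integrableOn_Ioi_rpow_of_lt (by linarith) ha).const_mul _) ?_ ?_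
        · intro t ⟨ht, _⟩
          calc volume.real {ω | t < min (X ω) (r * X ω ^ 2)}
              ≤ volume.real {ω | √(t / r) < X ω} :=
                measureReal_mono (μ := ℙ) fun ω (hω : t < _) =>
                  Real.sqrt_div_lt_of_lt_mul_sq ht.le hr (hX0 ω) (hω.trans_le (min_le_right _ _))
            _ ≤ C * √(t / r) ^ (-β) := htail _ (by positivity)
            _ = C * (r ^ (β / 2) * t ^ (-(β / 2))) := by rw [Real.sqrt_div_rpow_neg ht.le hr.le]
        · intro t ht
          exact (measureReal_mono (μ := ℙ) fun ω (hω : t < _) =>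
            hω.trans_le (min_le_left _ _)).trans (htail t (ha.trans ht))
    _ = (2 / (2 - β) + 1 / (β - 1)) * C * r ^ (β - 1) := by
        rw [integral_const_mul C, integral_const_mul C,
          integral_Ioc_zero_one_div_mul_rpow_neg_half hr hβ2,
          integral_Ioi_one_div_rpow_neg hr hβ1]
        ring

theorem stmt8 {Ω : Type*} [MeasureSpace Ω] [IsProbabilityMeasure (ℙ : Measure Ω)]
    (X : Ω → ℝ) (hXm : Measurable X) (hX0 : ∀ ω, 0 ≤ X ω)
    (β C : ℝ) (hβ : β ∈ Set.Ioo (1 : ℝ) 2) (hC : 0 < C)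
    (htail : ∀ x : ℝ, 0 < x → (ℙ {ω | x < X ω}).toReal ≤ C * x ^ (-β))
    (r : ℝ) (hr : 0 < r) :
    ∫ ω, min (X ω) (r * X ω ^ 2) ≤ (2 / (2 - β) + 1 / (β - 1)) * C * r ^ (β - 1) :=
  stmt8_general X hXm hX0 β C hβ htail r hr
end
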